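/- Let Z be a standard normal random variable, let d ≥ 1, and let a₁, …, a_d ∈ ℝ. Then E[ min_{j=1,…,d} exp(a_j·Z − a_j²/2) ] = 2·(1 − Φ( (max_{j} a_j − min_{j} a_j)/2 )), where Φ denotes the cumulative distribution function of the standard normal distribution on ℝ. -/

import Mathlib

/-! The exponent `a ↦ a z - a² / 2` is concave in `a`, so the minimum over the `aⱼ` is attained at
`m = min a` or `M = max a`, and these two candidates cross at `z = (m + M) / 2`. Multiplying the
standard Gaussian density by `exp (b z - b² / 2)` shifts its mean to `b` (exponential tilting), so
the integral over each side of `(m + M) / 2` is a Gaussian tail probability, both equal to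
`1 - Φ ((M - m) / 2)`. -/

open MeasureTheory Filter Set Topology ProbabilityTheory
open Real
open scoped NNReal

lemma concaveOn_mul_sub_sq_half (z : ℝ) : ConcaveOn ℝ univ (fun x : ℝ => x * z - x ^ 2 / 2) := by
  have h := ((LinearMap.mulRight ℝ z).concaveOn convex_univ).sub
    ((even_two.convexOn_pow (𝕜 := ℝ)).smul (by norm_num : (0 : ℝ) ≤ 1 / 2))
  refine h.congr fun x _ => ?_
  simp only [Pi.sub_apply, LinearMap.mulRight_apply, smul_eq_mul]
  ring

lemma QuasiconcaveOn.min_le_of_mem_Icc {𝕜 β : Type*} [Field 𝕜] [LinearOrder 𝕜]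
    [IsStrictOrderedRing 𝕜] [LinearOrder β] {s : Set 𝕜} {f : 𝕜 → β}
    (hf : QuasiconcaveOn 𝕜 s f) {x y z : 𝕜} (hx : x ∈ s) (hy : y ∈ s) (hz : z ∈ Icc x y) :
    min (f x) (f y) ≤ f z := by
  rw [← segment_eq_Icc (hz.1.trans hz.2)] at hz
  exact ((hf _).segment_subset ⟨hx, min_le_left _ _⟩ ⟨hy, min_le_right _ _⟩ hz).2

lemma QuasiconcaveOn.ciInf_comp_eq_min {ι β : Type*} [Finite ι] [Nonempty ι]
    [ConditionallyCompleteLinearOrder β] {s : Set ℝ} {f : ℝ → β} (hf : QuasiconcaveOn ℝ s f)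
    {a : ι → ℝ} (ha : ∀ j, a j ∈ s) :
    ⨅ j, f (a j) = min (f (⨅ j, a j)) (f (⨆ j, a j)) := by
  obtain ⟨jm, hjm⟩ := exists_eq_ciInf_of_finite (f := a)
  obtain ⟨jM, hjM⟩ := exists_eq_ciSup_of_finite (f := a)
  refine le_antisymm (le_min ?_ ?_) (le_ciInf fun j => ?_)
  · exact hjm ▸ ciInf_le (Finite.bddBelow_range _) jm
  · exact hjM ▸ ciInf_le (Finite.bddBelow_range _) jM
  · exact hf.min_le_of_mem_Icc (hjm ▸ ha jm) (hjM ▸ ha jM)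
      ⟨ciInf_le (Finite.bddBelow_range a) j, le_ciSup (Finite.bddAbove_range a) j⟩

lemma quasiconcaveOn_exp_mul_sub_sq_half (z : ℝ) :
    QuasiconcaveOn ℝ univ (fun x : ℝ => exp (x * z - x ^ 2 / 2)) :=
  (concaveOn_mul_sub_sq_half z).quasiconcaveOn.monotone_comp (g := exp) exp_monotone

lemma gaussianReal_tilted_mul (μ : ℝ) (v : ℝ≥0) (t : ℝ) :
    (gaussianReal μ v).tilted (t * ·) = gaussianReal (μ + v * t) v := by
  rcases eq_or_ne v 0 with rfl | hv
  · rw [NNReal.coe_zero, zero_mul, add_zero, gaussianReal_zero_var, Measure.tilted,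
      dirac_withDensity, integral_dirac, div_self (exp_pos _).ne', ENNReal.ofReal_one, one_smul]
  have hmgf : ∫ x, exp (t * x) ∂gaussianReal μ v = exp (μ * t + v * t ^ 2 / 2) :=
    congrFun mgf_fun_id_gaussianReal t
  rw [Measure.tilted, hmgf, gaussianReal_of_var_ne_zero _ hv, gaussianReal_of_var_ne_zero _ hv,
    ← withDensity_mul _ (measurable_gaussianPDF _ _) (by fun_prop)]
  -- completing the square: `-(x - μ)² / 2v + t x - μ t - v t² / 2 = -(x - μ - v t)² / 2v`
  congr 1
  funext x
  simp only [Pi.mul_apply, gaussianPDF, ← ENNReal.ofReal_mul (gaussianPDFReal_nonneg _ _ _)]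
  congr 1
  rw [gaussianPDFReal, gaussianPDFReal, mul_div_assoc, mul_assoc, ← exp_sub, ← exp_add]
  congr 2
  field_simp
  ring

lemma integrable_exp_mul_sub_sq_half_gaussianReal (b : ℝ) :
    Integrable (fun z => exp (b * z - b ^ 2 / 2)) (gaussianReal 0 1) := by
  simp only [exp_sub]
  exact (integrable_exp_mul_gaussianReal b).div_const _

lemma setIntegral_exp_mul_sub_sq_half_gaussianReal (b : ℝ) (s : Set ℝ) :
    ∫ z in s, exp (b * z - b ^ 2 / 2) ∂gaussianReal 0 1 = (gaussianReal b 1 s).toReal := by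
  have hmgf : ∫ x, exp (b * x) ∂gaussianReal 0 1 = exp (b ^ 2 / 2) := by
    simpa [mgf] using congrFun (mgf_fun_id_gaussianReal (μ := 0) (v := 1)) b
  have h := tilted_apply_eq_ofReal_integral (μ := gaussianReal 0 1) (b * ·) s
  rw [gaussianReal_tilted_mul, hmgf, NNReal.coe_one, one_mul, zero_add] at h
  simp only [← exp_sub] at h
  rw [h, ENNReal.toReal_ofReal (setIntegral_nonneg_of_ae (ae_of_all _ fun _ => (exp_pos _).le))]

lemma gaussianReal_Ioi_eq_centered (μ : ℝ) (v : ℝ≥0) (c : ℝ) :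
    gaussianReal μ v (Ioi c) = gaussianReal 0 v (Ioi (c - μ)) := by
  conv_lhs => rw [← zero_add μ, ← gaussianReal_map_add_const]
  rw [Measure.map_apply (measurable_add_const μ) measurableSet_Ioi, preimage_add_const_Ioi]

lemma gaussianReal_Iic_eq_centered_Ioi (μ : ℝ) {v : ℝ≥0} (hv : v ≠ 0) (c : ℝ) :
    gaussianReal μ v (Iic c) = gaussianReal 0 v (Ioi (μ - c)) := by
  conv_lhs => rw [← sub_zero μ, ← gaussianReal_map_const_sub]
  rw [Measure.map_apply (measurable_const_sub μ) measurableSet_Iic, preimage_const_sub_Iic]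
  have := nullSingletonClass_gaussianReal (μ := 0) hv
  exact measure_congr Ioi_ae_eq_Ici.symm

lemma integral_min_eq_setIntegral_add_setIntegral_compl {α : Type*} [MeasurableSpace α]
    {μ : Measure α} {f g : α → ℝ} (hf : Integrable f μ) (hg : Integrable g μ) {s : Set α}
    (hs : MeasurableSet s) (hle : ∀ z ∈ s, g z ≤ f z) (hge : ∀ z ∈ sᶜ, f z ≤ g z) :
    ∫ z, min (f z) (g z) ∂μ = ∫ z in s, g z ∂μ + ∫ z in sᶜ, f z ∂μ := by
  have hint : Integrable (fun z => min (f z) (g z)) μ := hf.inf hg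
  rw [← integral_add_compl hs hint]
  congr 1
  · exact setIntegral_congr_fun hs fun z hz => min_eq_right (hle z hz)
  · exact setIntegral_congr_fun hs.compl fun z hz => min_eq_left (hge z hz)

lemma integral_min_exp_mul_sub_sq_half_gaussianReal {m M : ℝ} (hmM : m ≤ M) :
    ∫ z, min (exp (m * z - m ^ 2 / 2)) (exp (M * z - M ^ 2 / 2)) ∂gaussianReal 0 1
      = 2 * (1 - (gaussianReal 0 1 (Iic ((M - m) / 2))).toReal) := by
  -- `(M z - M² / 2) - (m z - m² / 2) = (M - m) (z - (m + M) / 2)`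
  have hleft : ∀ z ∈ Iic ((m + M) / 2), exp (M * z - M ^ 2 / 2) ≤ exp (m * z - m ^ 2 / 2) :=
    fun z hz => exp_le_exp.mpr
      (by nlinarith [mul_nonneg (sub_nonneg.2 hmM) (sub_nonneg.2 (mem_Iic.1 hz))])
  have hright : ∀ z ∈ (Iic ((m + M) / 2))ᶜ, exp (m * z - m ^ 2 / 2) ≤ exp (M * z - M ^ 2 / 2) :=
    fun z hz => exp_le_exp.mpr
      (by nlinarith [mul_nonneg (sub_nonneg.2 hmM) (sub_nonneg.2 (notMem_Iic.1 hz).le)])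
  rw [integral_min_eq_setIntegral_add_setIntegral_compl
      (integrable_exp_mul_sub_sq_half_gaussianReal m)
      (integrable_exp_mul_sub_sq_half_gaussianReal M) measurableSet_Iic hleft hright,
    compl_Iic, setIntegral_exp_mul_sub_sq_half_gaussianReal,
    setIntegral_exp_mul_sub_sq_half_gaussianReal,
    gaussianReal_Iic_eq_centered_Ioi M one_ne_zero, gaussianReal_Ioi_eq_centered m,
    show M - (m + M) / 2 = (M - m) / 2 by ring, show (m + M) / 2 - m = (M - m) / 2 by ring,
    ← compl_Iic, prob_compl_eq_one_sub measurableSet_Iic,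
    ENNReal.toReal_sub_of_le prob_le_one ENNReal.one_ne_top, ENNReal.toReal_one]
  ring

theorem empirical_tail_copulas_stmt17_general
    {Ω : Type*} [MeasurableSpace Ω] (P : Measure Ω)
    (Z : Ω → ℝ) (hZmeas : Measurable Z)
    (hZ : Measure.map Z P = gaussianReal 0 1)
    (d : ℕ) (hd : 1 ≤ d) (a : Fin d → ℝ) :
    ∫ ω, ⨅ j, Real.exp (a j * Z ω - a j ^ 2 / 2) ∂P
      = 2 * (1 - ((gaussianReal 0 1)
          (Iic (((⨆ j, a j) - ⨅ j, a j) / 2))).toReal) := by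
  have : Nonempty (Fin d) := Fin.pos_iff_nonempty.mp hd
  have hmin (z : ℝ) := (quasiconcaveOn_exp_mul_sub_sq_half z).ciInf_comp_eq_min
    (fun j => mem_univ (a j))
  set m := ⨅ j, a j
  set M := ⨆ j, a j
  simp only [hmin]
  rw [← integral_map (f := fun z => min (exp (m * z - m ^ 2 / 2)) (exp (M * z - M ^ 2 / 2)))
    hZmeas.aemeasurable (by fun_prop), hZ]
  exact integral_min_exp_mul_sub_sq_half_gaussianReal
    (ciInf_le_ciSup (Finite.bddBelow_range a) (Finite.bddAbove_range a))

/-- The tail dependence coefficient of the one-dimensional Smith model: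
`E[min_j exp(aⱼZ − aⱼ²/2)] = 2(1 − Φ((max a − min a)/2))`. -/
theorem empirical_tail_copulas_stmt17
    {Ω : Type*} [MeasurableSpace Ω] (P : Measure Ω) [IsProbabilityMeasure P]
    (Z : Ω → ℝ) (hZmeas : Measurable Z)
    (hZ : Measure.map Z P = gaussianReal 0 1)
    (d : ℕ) (hd : 1 ≤ d) (a : Fin d → ℝ) :
    ∫ ω, ⨅ j, Real.exp (a j * Z ω - a j ^ 2 / 2) ∂P
      = 2 * (1 - ((gaussianReal 0 1)
          (Iic (((⨆ j, a j) - ⨅ j, a j) / 2))).toReal) :=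
  empirical_tail_copulas_stmt17_general P Z hZmeas hZ d hd a
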